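/- arXiv:2207.01619 — 2 statements merged into one kernel-verified Lean document; each statement's English description precedes it below -/
import Mathlib

section
/- Fix a, x ∈ ℝ and define f(r) = Φ((a − r·x)/√(1 − r²)) for r ∈ (−1, 1). Then f is three times differentiable at r = 0 and f′(0) = −φ(a)·g₀(a)·g₁(x) = −φ(a)·x, f″(0) = −φ(a)·g₁(a)·g₂(x) = −φ(a)·a·(x²−1), and f‴(0) = −φ(a)·g₂(a)·g₃(x) = −φ(a)·(a²−1)·(x³−3x). -/
open MeasureTheory ProbabilityTheory

/-- The probabilists' Hermite polynomials `g₀, g₁, g₂, g₃`. -/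
noncomputable def g : ℕ → ℝ → ℝ
  | 0, _ => 1
  | 1, x => x
  | 2, x => x ^ 2 - 1
  | 3, x => x ^ 3 - 3 * x
  | _, _ => 0

/-- The standard normal density `φ(x) = (2π)^{-1/2} exp(-x²/2)`. -/
noncomputable def phi (x : ℝ) : ℝ := Real.exp (-x ^ 2 / 2) / Real.sqrt (2 * Real.pi)

/-- The standard normal cumulative distribution function `Φ`. -/
noncomputable def Phi (a : ℝ) : ℝ := ((gaussianReal 0 1) (Set.Iio a)).toReal

/-! Write `f = Φ ∘ u` with `u r = (a - r x) w r`, where `w r = (1 - r²)^{-1/2}` satisfies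
`w' = r w³`. Since `Φ' = φ`, `φ' = -y φ` and `(-y φ)' = (y² - 1) φ`, the chain rule to third order
gives `f''' = φ(u) (u''' - 3 u u' u'' + (u² - 1) u'³)`, and at `r = 0` we have `u = a`, `u' = -x`,
`u'' = a`, `u''' = -3x`, which produces the Hermite factors. -/

open Filter Topology

theorem phi_eq_gaussianPDFReal : phi = gaussianPDFReal 0 1 := by
  funext t
  simp [phi, gaussianPDFReal, div_eq_inv_mul]

theorem Phi_eq_add_integral (y : ℝ) : Phi y = Phi 0 + ∫ t in (0 : ℝ)..y, phi t := by
  have hint : Integrable phi := phi_eq_gaussianPDFReal ▸ integrable_gaussianPDFReal 0 1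
  have hPhi (z : ℝ) : Phi z = ∫ t in Set.Iic z, phi t := by
    rw [Phi, gaussianReal_apply_eq_integral 0 one_ne_zero, ← phi_eq_gaussianPDFReal,
      ENNReal.toReal_ofReal
        (integral_nonneg fun t => phi_eq_gaussianPDFReal ▸ gaussianPDFReal_nonneg 0 1 t),
      integral_Iic_eq_integral_Iio]
  rw [hPhi, hPhi, ← intervalIntegral.integral_Iic_sub_Iic hint.integrableOn hint.integrableOn]
  ring

theorem continuous_phi : Continuous phi := by
  unfold phi; fun_prop

theorem hasDerivAt_Phi (y : ℝ) : HasDerivAt Phi (phi y) y := by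
  rw [show Phi = fun y => Phi 0 + ∫ t in (0 : ℝ)..y, phi t from funext Phi_eq_add_integral]
  exact (intervalIntegral.integral_hasDerivAt_right (continuous_phi.intervalIntegrable _ _)
    continuous_phi.aestronglyMeasurable.stronglyMeasurableAtFilter
    continuous_phi.continuousAt).const_add _

theorem hasDerivAt_phi (y : ℝ) : HasDerivAt phi (-y * phi y) y := by
  have h := (((hasDerivAt_pow 2 y).fun_neg.div_const 2).exp).div_const (Real.sqrt (2 * Real.pi))
  exact h.congr_deriv (by simp only [phi]; push_cast; ring)

theorem hasDerivAt_neg_mul_phi (y : ℝ) :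
    HasDerivAt (fun y => -y * phi y) ((y ^ 2 - 1) * phi y) y :=
  ((hasDerivAt_neg y).mul (hasDerivAt_phi y)).congr_deriv (by ring)

section ThirdOrderChainRule

variable {F F₁ F₂ F₃ u u₁ u₂ : ℝ → ℝ} {u₃ r₀ : ℝ}

theorem deriv_comp_eventuallyEq (hF : ∀ y, HasDerivAt F (F₁ y) y)
    (hu : ∀ᶠ r in 𝓝 r₀, HasDerivAt u (u₁ r) r) :
    deriv (F ∘ u) =ᶠ[𝓝 r₀] fun r => F₁ (u r) * u₁ r :=
  hu.mono fun r hur => ((hF (u r)).comp r hur).deriv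

theorem HasDerivAt.comp_mul_deriv {r : ℝ} (hF₁ : ∀ y, HasDerivAt F₁ (F₂ y) y)
    (hu : HasDerivAt u (u₁ r) r) (hu₁ : HasDerivAt u₁ (u₂ r) r) :
    HasDerivAt (fun r => F₁ (u r) * u₁ r) (F₂ (u r) * u₁ r ^ 2 + F₁ (u r) * u₂ r) r :=
  (((hF₁ (u r)).comp r hu).fun_mul hu₁).congr_deriv (by simp only [Function.comp_apply]; ring)

theorem deriv_deriv_comp_eventuallyEq (hF : ∀ y, HasDerivAt F (F₁ y) y)
    (hF₁ : ∀ y, HasDerivAt F₁ (F₂ y) y) (hu : ∀ᶠ r in 𝓝 r₀, HasDerivAt u (u₁ r) r)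
    (hu₁ : ∀ᶠ r in 𝓝 r₀, HasDerivAt u₁ (u₂ r) r) :
    deriv (deriv (F ∘ u)) =ᶠ[𝓝 r₀] fun r => F₂ (u r) * u₁ r ^ 2 + F₁ (u r) * u₂ r := by
  filter_upwards [hu.eventually_nhds, hu₁] with r hu_near hu₁r
  rw [(deriv_comp_eventuallyEq hF hu_near).deriv_eq]
  exact (hu_near.self_of_nhds.comp_mul_deriv hF₁ hu₁r).deriv

theorem hasDerivAt_deriv_deriv_comp (hF : ∀ y, HasDerivAt F (F₁ y) y)
    (hF₁ : ∀ y, HasDerivAt F₁ (F₂ y) y) (hF₂ : ∀ y, HasDerivAt F₂ (F₃ y) y)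
    (hu : ∀ᶠ r in 𝓝 r₀, HasDerivAt u (u₁ r) r) (hu₁ : ∀ᶠ r in 𝓝 r₀, HasDerivAt u₁ (u₂ r) r)
    (hu₂ : HasDerivAt u₂ u₃ r₀) :
    HasDerivAt (deriv (deriv (F ∘ u)))
      (F₃ (u r₀) * u₁ r₀ ^ 3 + 3 * F₂ (u r₀) * u₁ r₀ * u₂ r₀ + F₁ (u r₀) * u₃) r₀ := by
  have hu₀ := hu.self_of_nhds
  have hG := (((hF₂ (u r₀)).comp r₀ hu₀).fun_mul (hu₁.self_of_nhds.fun_pow 2)).fun_add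
    (((hF₁ (u r₀)).comp r₀ hu₀).fun_mul hu₂)
  refine (hG.congr_deriv ?_).congr_of_eventuallyEq (deriv_deriv_comp_eventuallyEq hF hF₁ hu hu₁)
  simp only [Function.comp_apply]
  push_cast
  ring

end ThirdOrderChainRule

noncomputable def invSqrtOneSubSq (r : ℝ) : ℝ := (√(1 - r ^ 2))⁻¹

theorem invSqrtOneSubSq_zero : invSqrtOneSubSq 0 = 1 := by simp [invSqrtOneSubSq]

theorem hasDerivAt_invSqrtOneSubSq {r : ℝ} (hr : r ^ 2 < 1) :
    HasDerivAt invSqrtOneSubSq (r * invSqrtOneSubSq r ^ 3) r := by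
  have hpos : 0 < 1 - r ^ 2 := by linarith
  have hsqrt : √(1 - r ^ 2) ≠ 0 := (Real.sqrt_pos.mpr hpos).ne'
  refine (((hasDerivAt_pow 2 r).const_sub 1).sqrt hpos.ne').inv hsqrt |>.congr_deriv ?_
  simp only [invSqrtOneSubSq]
  field_simp
  ring

theorem eventually_sq_lt_one : ∀ᶠ r in 𝓝 (0 : ℝ), r ^ 2 < 1 :=
  (continuous_pow 2).continuousAt.eventually_lt continuousAt_const (by norm_num)

section Threshold

variable (a x : ℝ)

noncomputable def threshold (r : ℝ) : ℝ := (a - r * x) * invSqrtOneSubSq r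

noncomputable def threshold₁ (r : ℝ) : ℝ :=
  -x * invSqrtOneSubSq r + (a - r * x) * (r * invSqrtOneSubSq r ^ 3)

noncomputable def threshold₂ (r : ℝ) : ℝ :=
  (a - 3 * r * x) * invSqrtOneSubSq r ^ 3 + 3 * r ^ 2 * (a - r * x) * invSqrtOneSubSq r ^ 5

variable {a x}

theorem hasDerivAt_threshold {r : ℝ} (hr : r ^ 2 < 1) :
    HasDerivAt (threshold a x) (threshold₁ a x r) r :=
  (((hasDerivAt_mul_const x).const_sub a).fun_mul (hasDerivAt_invSqrtOneSubSq hr)).congr_deriv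
    (by simp only [threshold₁])

theorem hasDerivAt_threshold₁ {r : ℝ} (hr : r ^ 2 < 1) :
    HasDerivAt (threshold₁ a x) (threshold₂ a x r) r := by
  have hw := hasDerivAt_invSqrtOneSubSq hr
  have h := (hw.const_mul (-x)).fun_add
    (((hasDerivAt_mul_const x).const_sub a).fun_mul ((hasDerivAt_id' r).fun_mul (hw.fun_pow 3)))
  refine h.congr_deriv ?_
  simp only [threshold₂]
  push_cast
  ring

theorem hasDerivAt_threshold₂_zero : HasDerivAt (threshold₂ a x) (-3 * x) 0 := by
  have hw := hasDerivAt_invSqrtOneSubSq (r := 0) (by norm_num)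
  have hlin (c : ℝ) : HasDerivAt (fun r : ℝ => a - c * r * x) (-(c * x)) 0 :=
    (((hasDerivAt_id 0).const_mul c).mul_const x).const_sub a |>.congr_deriv (by simp)
  have h := ((hlin 3).fun_mul (hw.fun_pow 3)).fun_add
    ((((hasDerivAt_pow 2 0).const_mul 3).fun_mul (hlin 1)).fun_mul (hw.fun_pow 5))
  refine (h.congr_deriv ?_).congr_of_eventuallyEq (Eventually.of_forall fun r => ?_)
  · simp [invSqrtOneSubSq_zero]
  · simp only [threshold₂]; ring

end Threshold

/-- Fix `a, x ∈ ℝ` and let `f(r) = Φ((a − r x)/√(1 − r²))`.  Then `f` is three times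
differentiable at `r = 0`, with `f′(0) = −φ(a) g₀(a) g₁(x)`,
`f″(0) = −φ(a) g₁(a) g₂(x)` and `f‴(0) = −φ(a) g₂(a) g₃(x)`. -/
theorem deriv_Phi_expansion (a x : ℝ) :
    let f : ℝ → ℝ := fun r => Phi ((a - r * x) / Real.sqrt (1 - r ^ 2))
    DifferentiableAt ℝ f 0 ∧
    DifferentiableAt ℝ (deriv f) 0 ∧
    DifferentiableAt ℝ (deriv (deriv f)) 0 ∧
    deriv f 0 = -phi a * g 0 a * g 1 x ∧
    deriv (deriv f) 0 = -phi a * g 1 a * g 2 x ∧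
    deriv (deriv (deriv f)) 0 = -phi a * g 2 a * g 3 x := by
  intro f
  have hf : f = Phi ∘ threshold a x := by
    funext r; simp only [f, Function.comp_apply, threshold, invSqrtOneSubSq, div_eq_mul_inv]
  have hu := eventually_sq_lt_one.mono fun r hr => hasDerivAt_threshold (a := a) (x := x) hr
  have hu₁ := eventually_sq_lt_one.mono fun r hr => hasDerivAt_threshold₁ (a := a) (x := x) hr
  have h₁ := deriv_comp_eventuallyEq hasDerivAt_Phi hu
  have h₂ := deriv_deriv_comp_eventuallyEq hasDerivAt_Phi hasDerivAt_phi hu hu₁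
  have h₃ := hasDerivAt_deriv_deriv_comp hasDerivAt_Phi hasDerivAt_phi hasDerivAt_neg_mul_phi
    hu hu₁ hasDerivAt_threshold₂_zero
  obtain ⟨hu0, hu₁0, hu₂0⟩ :
      threshold a x 0 = a ∧ threshold₁ a x 0 = -x ∧ threshold₂ a x 0 = a := by
    simp [threshold, threshold₁, threshold₂, invSqrtOneSubSq_zero]
  have hd₁ := hu.self_of_nhds.comp_mul_deriv hasDerivAt_phi hu₁.self_of_nhds
  rw [hf]
  refine ⟨((hasDerivAt_Phi _).comp 0 hu.self_of_nhds).differentiableAt,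
    hd₁.differentiableAt.congr_of_eventuallyEq h₁, h₃.differentiableAt, ?_, ?_, ?_⟩
  · rw [h₁.eq_of_nhds, hu0, hu₁0]; simp only [g]; ring
  · rw [h₂.eq_of_nhds, hu0, hu₁0, hu₂0]; simp only [g]; ring
  · rw [h₃.deriv, hu0, hu₁0, hu₂0]; simp only [g]; ring
end

section
/- There exists a universal constant C > 0 such that for every natural number m, every finite index set S with |S| = m, and every symmetric function σ : S × S → ℝ, the following holds: Σ |σ(i,j)·σ(i,k)·σ(i,l)|, where the sum runs over all quadruples (i, j, k, l) ∈ S⁴ of pairwise distinct indices, is at most C·m²·( Σ_{i≠j} σ(i,j)² )^{1/2} · ( Σ_{i≠j} σ(i,j)⁴ )^{1/2}, where the sums Σ_{i≠j} run over all ordered pairs of distinct indices in S. -/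
set_option maxHeartbeats 1000000

/-- Pointwise AM-GM bound. -/
lemma qsb_pointwise (t a b c : ℝ) (ht : 0 < t) :
    |a * b * c| ≤ t / 2 * a ^ 2 + 1 / (4 * t) * b ^ 4 + 1 / (4 * t) * c ^ 4 := by
  have h1 : |a * b * c| = |a| * (|b| * |c|) := by
    rw [abs_mul, abs_mul, mul_assoc]
  have ha : |a| ^ 2 = a ^ 2 := sq_abs a
  have hbc : (|b| * |c|) ^ 2 = b ^ 2 * c ^ 2 := by
    rw [mul_pow, sq_abs, sq_abs]
  have h2 : 0 ≤ (t * |a| - |b| * |c|) ^ 2 := sq_nonneg _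
  rw [h1, show t / 2 * a ^ 2 + 1 / (4 * t) * b ^ 4 + 1 / (4 * t) * c ^ 4
      = (2 * t ^ 2 * a ^ 2 + b ^ 4 + c ^ 4) / (4 * t) by field_simp; ring,
    le_div_iff₀ (by positivity)]
  nlinarith [h2, ha, hbc, sq_nonneg (b ^ 2 - c ^ 2)]

/-- Term-level bound handling the `if`s. -/
lemma qsb_term (t : ℝ) (ht : 0 < t) (P Q1 Q2 Q3 : Prop)
    [Decidable P] [Decidable Q1] [Decidable Q2] [Decidable Q3]
    (hPQ : P → Q1 ∧ Q2 ∧ Q3) (a b c : ℝ) :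
    (if P then |a * b * c| else 0)
      ≤ t / 2 * (if Q1 then a ^ 2 else 0) + 1 / (4 * t) * (if Q2 then b ^ 4 else 0)
        + 1 / (4 * t) * (if Q3 then c ^ 4 else 0) := by
  have hc1 : (0:ℝ) ≤ t / 2 := by linarith
  have hc2 : (0:ℝ) ≤ 1 / (4 * t) := le_of_lt (by positivity)
  have n1 : (0:ℝ) ≤ t / 2 * (if Q1 then a ^ 2 else 0) :=
    mul_nonneg hc1 (by split_ifs; exacts [sq_nonneg a, le_refl 0])
  have n2 : (0:ℝ) ≤ 1 / (4 * t) * (if Q2 then b ^ 4 else 0) :=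
    mul_nonneg hc2 (by split_ifs; exacts [by positivity, le_refl 0])
  have n3 : (0:ℝ) ≤ 1 / (4 * t) * (if Q3 then c ^ 4 else 0) :=
    mul_nonneg hc2 (by split_ifs; exacts [by positivity, le_refl 0])
  by_cases hP : P
  · obtain ⟨q1, q2, q3⟩ := hPQ hP
    rw [if_pos hP, if_pos q1, if_pos q2, if_pos q3]
    exact qsb_pointwise t a b c ht
  · rw [if_neg hP]
    linarith

/-- There is a universal constant `C > 0` such that for every finite index set `S` of
cardinality `m` and every symmetric `σ : S × S → ℝ`, the sum of
`|σ(i,j) σ(i,k) σ(i,l)|` over quadruples of pairwise distinct indices is at most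
`C m² (Σ_{i≠j} σ(i,j)²)^{1/2} (Σ_{i≠j} σ(i,j)⁴)^{1/2}`. -/
theorem quadruple_sum_bound :
    ∃ C > (0 : ℝ), ∀ (m : ℕ) (S : Type) (_ : Fintype S) (_ : DecidableEq S),
      Fintype.card S = m →
      ∀ σ : S → S → ℝ, (∀ i j, σ i j = σ j i) →
        (∑ i : S, ∑ j : S, ∑ k : S, ∑ l : S,
            if i ≠ j ∧ i ≠ k ∧ i ≠ l ∧ j ≠ k ∧ j ≠ l ∧ k ≠ l then
              |σ i j * σ i k * σ i l| else 0)
          ≤ C * (m : ℝ) ^ 2 *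
            Real.sqrt (∑ i : S, ∑ j : S, if i ≠ j then (σ i j) ^ 2 else 0) *
            Real.sqrt (∑ i : S, ∑ j : S, if i ≠ j then (σ i j) ^ 4 else 0) := by
  refine ⟨1, one_pos, ?_⟩
  intro m S _ _ hm σ hsym
  subst hm
  set A := ∑ i : S, ∑ j : S, if i ≠ j then (σ i j) ^ 2 else 0 with hA
  set B := ∑ i : S, ∑ j : S, if i ≠ j then (σ i j) ^ 4 else 0 with hB
  have hA0 : 0 ≤ A := by
    apply Finset.sum_nonneg; intro i _; apply Finset.sum_nonneg; intro j _
    split_ifs <;> positivity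
  have hB0 : 0 ≤ B := by
    apply Finset.sum_nonneg; intro i _; apply Finset.sum_nonneg; intro j _
    split_ifs <;> positivity
  set M := (Fintype.card S : ℝ) with hM
  have hM0 : 0 ≤ M := by positivity
  by_cases hAz : A = 0
  · have hz : ∀ i j : S, i ≠ j → σ i j = 0 := by
      intro i j hij
      have h1 : ∀ i ∈ Finset.univ, (0:ℝ) ≤ ∑ j : S, if i ≠ j then (σ i j) ^ 2 else 0 := by
        intro i _; apply Finset.sum_nonneg; intro j _; split_ifs <;> positivity
      have h3 := (Finset.sum_eq_zero_iff_of_nonneg h1).mp hAz i (Finset.mem_univ i)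
      have h4 : ∀ j ∈ Finset.univ, (0:ℝ) ≤ if i ≠ j then (σ i j) ^ 2 else 0 := by
        intro j _; split_ifs <;> positivity
      have h5 := (Finset.sum_eq_zero_iff_of_nonneg h4).mp h3 j (Finset.mem_univ j)
      rw [if_pos hij] at h5
      exact pow_eq_zero_iff (by norm_num) |>.mp h5
    have hL : (∑ i : S, ∑ j : S, ∑ k : S, ∑ l : S,
        if i ≠ j ∧ i ≠ k ∧ i ≠ l ∧ j ≠ k ∧ j ≠ l ∧ k ≠ l then
          |σ i j * σ i k * σ i l| else 0) = 0 := by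
      apply Finset.sum_eq_zero; intro i _
      apply Finset.sum_eq_zero; intro j _
      apply Finset.sum_eq_zero; intro k _
      apply Finset.sum_eq_zero; intro l _
      split_ifs with h
      · rw [hz i j h.1]; simp
      · rfl
    rw [hL]
    positivity
  have hApos : 0 < A := lt_of_le_of_ne hA0 (Ne.symm hAz)
  by_cases hBz : B = 0
  · have hz : ∀ i j : S, i ≠ j → σ i j = 0 := by
      intro i j hij
      have h1 : ∀ i ∈ Finset.univ, (0:ℝ) ≤ ∑ j : S, if i ≠ j then (σ i j) ^ 4 else 0 := by
        intro i _; apply Finset.sum_nonneg; intro j _; split_ifs <;> positivity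
      have h3 := (Finset.sum_eq_zero_iff_of_nonneg h1).mp hBz i (Finset.mem_univ i)
      have h4 : ∀ j ∈ Finset.univ, (0:ℝ) ≤ if i ≠ j then (σ i j) ^ 4 else 0 := by
        intro j _; split_ifs <;> positivity
      have h5 := (Finset.sum_eq_zero_iff_of_nonneg h4).mp h3 j (Finset.mem_univ j)
      rw [if_pos hij] at h5
      exact pow_eq_zero_iff (by norm_num) |>.mp h5
    have hL : (∑ i : S, ∑ j : S, ∑ k : S, ∑ l : S,
        if i ≠ j ∧ i ≠ k ∧ i ≠ l ∧ j ≠ k ∧ j ≠ l ∧ k ≠ l then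
          |σ i j * σ i k * σ i l| else 0) = 0 := by
      apply Finset.sum_eq_zero; intro i _
      apply Finset.sum_eq_zero; intro j _
      apply Finset.sum_eq_zero; intro k _
      apply Finset.sum_eq_zero; intro l _
      split_ifs with h
      · rw [hz i j h.1]; simp
      · rfl
    rw [hL]
    positivity
  have hBpos : 0 < B := lt_of_le_of_ne hB0 (Ne.symm hBz)
  set a := Real.sqrt A with ha
  set b := Real.sqrt B with hb
  have hap : 0 < a := Real.sqrt_pos.mpr hApos
  have hbp : 0 < b := Real.sqrt_pos.mpr hBpos
  have haA : a ^ 2 = A := Real.sq_sqrt hA0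
  have hbB : b ^ 2 = B := Real.sq_sqrt hB0
  set t := b / a with ht
  have htp : 0 < t := div_pos hbp hap
  have key : (∑ i : S, ∑ j : S, ∑ k : S, ∑ l : S,
      if i ≠ j ∧ i ≠ k ∧ i ≠ l ∧ j ≠ k ∧ j ≠ l ∧ k ≠ l then
        |σ i j * σ i k * σ i l| else 0)
      ≤ ∑ i : S, ∑ j : S, ∑ k : S, ∑ l : S,
        (t / 2 * (if i ≠ j then (σ i j) ^ 2 else 0)
          + 1 / (4 * t) * (if i ≠ k then (σ i k) ^ 4 else 0)
          + 1 / (4 * t) * (if i ≠ l then (σ i l) ^ 4 else 0)) := by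
    apply Finset.sum_le_sum; intro i _
    apply Finset.sum_le_sum; intro j _
    apply Finset.sum_le_sum; intro k _
    apply Finset.sum_le_sum; intro l _
    exact qsb_term t htp _ _ _ _ (fun h => ⟨h.1, h.2.1, h.2.2.1⟩) _ _ _
  refine key.trans ?_
  have split1 : (∑ i : S, ∑ j : S, ∑ k : S, ∑ l : S,
        (t / 2 * (if i ≠ j then (σ i j) ^ 2 else 0)
          + 1 / (4 * t) * (if i ≠ k then (σ i k) ^ 4 else 0)
          + 1 / (4 * t) * (if i ≠ l then (σ i l) ^ 4 else 0)))
      = t / 2 * (M ^ 2 * A) + 1 / (4 * t) * (M ^ 2 * B) + 1 / (4 * t) * (M ^ 2 * B) := by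
    simp only [Finset.sum_add_distrib, Finset.sum_const, Finset.card_univ, nsmul_eq_mul,
      ← Finset.mul_sum, ← Finset.sum_mul]
    rw [← hA, ← hB, ← hM]
    ring
  rw [split1]
  have hta : t / 2 * (M ^ 2 * A) = M ^ 2 * (a * b) / 2 := by
    rw [ht, ← haA]
    field_simp
  have htb : 1 / (4 * t) * (M ^ 2 * B) = M ^ 2 * (a * b) / 4 := by
    rw [ht, ← hbB]
    field_simp
  rw [hta, htb]
  have : M ^ 2 * (a * b) / 2 + M ^ 2 * (a * b) / 4 + M ^ 2 * (a * b) / 4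
      = 1 * M ^ 2 * a * b := by ring
  rw [this]
end
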